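/- arXiv:1305.3029 — 7 statements merged into one kernel-verified Lean document; each statement's English description precedes it below -/
import Mathlib

section
/- Suppose that to every finite group G (in a fixed universe) is assigned a group homomorphism Φ_G : G →* G such that for every homomorphism f : G →* H between finite groups one has f ∘ Φ_G = Φ_H ∘ f. Then either Φ_G is the identity homomorphism for every finite group G, or Φ_G is the trivial homomorphism (sending every element to 1) for every finite group G. -/
/-!
Naturality along the inclusion of `zpowers g` shows that `Φ` maps each element into the cyclic
subgroup it generates; naturality along the two projections of `G × H` then shows that `Φ` acts on
`x : G` and `y : H` by one common exponent, so that whether `Φ` fixes or kills an element only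
depends on its order. Hence `Φ` either fixes all involutions or kills all involutions, and then
does the same to the rotation `r 1 = sr 0 * sr 1` of every dihedral group; since `r 1` has order
`m` in the dihedral group of order `2 m`, every element of order `m` is fixed, respectively killed.
-/

universe u

def IsNaturalEndo (Φ : ∀ (G : Type u) [Group G] [Finite G], G →* G) : Prop :=
  ∀ (G H : Type u) [Group G] [Finite G] [Group H] [Finite H] (f : G →* H),
    f.comp (Φ G) = (Φ H).comp f

theorem exists_sq_eq_one_sq_eq_one_orderOf_mul_eq (n : ℕ) :
    ∃ s t : ULift.{u} (DihedralGroup n), s ^ 2 = 1 ∧ t ^ 2 = 1 ∧ orderOf (s * t) = n := by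
  refine ⟨.up (.sr 0), .up (.sr 1), ?_, ?_, ?_⟩
  · exact congrArg ULift.up ((pow_two _).trans (DihedralGroup.sr_mul_self 0))
  · exact congrArg ULift.up ((pow_two _).trans (DihedralGroup.sr_mul_self 1))
  · rw [← MulEquiv.ulift.orderOf_eq]
    show orderOf (DihedralGroup.sr 0 * DihedralGroup.sr 1 : DihedralGroup n) = n
    rw [DihedralGroup.sr_mul_sr, sub_zero, DihedralGroup.orderOf_r_one]

namespace IsNaturalEndo

variable {Φ : ∀ (G : Type u) [Group G] [Finite G], G →* G}
  {G H : Type u} [Group G] [Finite G] [Group H] [Finite H]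

theorem naturality_apply (hΦ : IsNaturalEndo Φ) (f : G →* H) (x : G) : f (Φ G x) = Φ H (f x) :=
  DFunLike.congr_fun (hΦ G H f) x

theorem apply_mem_zpowers (hΦ : IsNaturalEndo Φ) (g : G) : Φ G g ∈ Subgroup.zpowers g := by
  have h := hΦ.naturality_apply (Subgroup.zpowers g).subtype ⟨g, Subgroup.mem_zpowers g⟩
  exact h ▸ SetLike.coe_mem _

theorem exists_zpow_eq_and_zpow_eq (hΦ : IsNaturalEndo Φ) (x : G) (y : H) :
    ∃ j : ℤ, Φ G x = x ^ j ∧ Φ H y = y ^ j := by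
  obtain ⟨j, hj⟩ := Subgroup.mem_zpowers_iff.1 (hΦ.apply_mem_zpowers (x, y))
  exact ⟨j, (hΦ.naturality_apply (MonoidHom.fst G H) (x, y)).symm.trans (congrArg Prod.fst hj.symm),
    (hΦ.naturality_apply (MonoidHom.snd G H) (x, y)).symm.trans (congrArg Prod.snd hj.symm)⟩

theorem apply_eq_zpow_of_orderOf_dvd (hΦ : IsNaturalEndo Φ) {x : G} {y : H} {i : ℤ}
    (hx : Φ G x = x ^ i) (hyx : orderOf y ∣ orderOf x) : Φ H y = y ^ i := by
  obtain ⟨j, hxj, hyj⟩ := hΦ.exists_zpow_eq_and_zpow_eq x y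
  rw [hxj, zpow_eq_zpow_iff_modEq] at hx
  rw [hyj, zpow_eq_zpow_iff_modEq]
  exact hx.of_dvd (Int.natCast_dvd_natCast.2 hyx)

theorem apply_eq_one_or_self_of_sq_eq_one (hΦ : IsNaturalEndo Φ) {x : G} (hx : x ^ 2 = 1) :
    Φ G x = 1 ∨ Φ G x = x := by
  obtain ⟨j, hj⟩ := Subgroup.mem_zpowers_iff.1 (hΦ.apply_mem_zpowers x)
  have hx' : x ^ (2 : ℤ) = 1 := by exact_mod_cast hx
  rcases Int.even_or_odd' j with ⟨k, rfl | rfl⟩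
  · left
    rw [← hj, zpow_mul, hx', one_zpow]
  · right
    rw [← hj, zpow_add, zpow_mul, hx', one_zpow, one_mul, zpow_one]

theorem apply_eq_self_of_orderOf_dvd (hΦ : IsNaturalEndo Φ) {x : G} {y : H} (hx : Φ G x = x)
    (hyx : orderOf y ∣ orderOf x) : Φ H y = y := by
  simpa using hΦ.apply_eq_zpow_of_orderOf_dvd (i := 1) (by simpa using hx) hyx

theorem apply_eq_one_of_orderOf_dvd (hΦ : IsNaturalEndo Φ) {x : G} {y : H} (hx : Φ G x = 1)
    (hyx : orderOf y ∣ orderOf x) : Φ H y = 1 := by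
  simpa using hΦ.apply_eq_zpow_of_orderOf_dvd (i := 0) (by simpa using hx) hyx

theorem apply_eq_self_of_apply_eq_self_of_orderOf_eq_two (hΦ : IsNaturalEndo Φ) {x : G}
    (hx2 : orderOf x = 2) (hx : Φ G x = x) (y : H) : Φ H y = y := by
  have : NeZero (orderOf y) := ⟨(orderOf_pos y).ne'⟩
  obtain ⟨s, t, hs, ht, hst⟩ := exists_sq_eq_one_sq_eq_one_orderOf_mul_eq.{u} (orderOf y)
  have hs' := hΦ.apply_eq_self_of_orderOf_dvd hx (hx2 ▸ orderOf_dvd_of_pow_eq_one hs)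
  have ht' := hΦ.apply_eq_self_of_orderOf_dvd hx (hx2 ▸ orderOf_dvd_of_pow_eq_one ht)
  have hst' : Φ _ (s * t) = s * t := by rw [map_mul, hs', ht']
  exact hΦ.apply_eq_self_of_orderOf_dvd hst' hst.symm.dvd

theorem apply_eq_one_of_apply_eq_one_of_orderOf_eq_two (hΦ : IsNaturalEndo Φ) {x : G}
    (hx2 : orderOf x = 2) (hx : Φ G x = 1) (y : H) : Φ H y = 1 := by
  have : NeZero (orderOf y) := ⟨(orderOf_pos y).ne'⟩
  obtain ⟨s, t, hs, ht, hst⟩ := exists_sq_eq_one_sq_eq_one_orderOf_mul_eq.{u} (orderOf y)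
  have hs' := hΦ.apply_eq_one_of_orderOf_dvd hx (hx2 ▸ orderOf_dvd_of_pow_eq_one hs)
  have ht' := hΦ.apply_eq_one_of_orderOf_dvd hx (hx2 ▸ orderOf_dvd_of_pow_eq_one ht)
  have hst' : Φ _ (s * t) = 1 := by rw [map_mul, hs', ht', mul_one]
  exact hΦ.apply_eq_one_of_orderOf_dvd hst' hst.symm.dvd

end IsNaturalEndo

/-- A natural family of endomorphisms of all finite groups is either the identity
everywhere or trivial everywhere. -/
theorem center_of_category_of_finite_groups
    (Φ : ∀ (G : Type u) [Group G] [Finite G], G →* G)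
    (nat : ∀ (G H : Type u) [Group G] [Finite G] [Group H] [Finite H] (f : G →* H),
      f.comp (Φ G) = (Φ H).comp f) :
    (∀ (G : Type u) [Group G] [Finite G], Φ G = MonoidHom.id G) ∨
    (∀ (G : Type u) [Group G] [Finite G], Φ G = 1) := by
  have hΦ : IsNaturalEndo Φ := nat
  let x : ULift.{u} (Multiplicative (ZMod 2)) := .up (.ofAdd 1)
  have hx2 : orderOf x = 2 := by
    rw [← MulEquiv.ulift.orderOf_eq]
    exact (orderOf_ofAdd_eq_addOrderOf (1 : ZMod 2)).trans (ZMod.addOrderOf_one 2)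
  rcases hΦ.apply_eq_one_or_self_of_sq_eq_one (hx2 ▸ pow_orderOf_eq_one x) with hx | hx
  · right
    intro G _ _
    ext g
    exact hΦ.apply_eq_one_of_apply_eq_one_of_orderOf_eq_two hx2 hx g
  · left
    intro G _ _
    ext g
    exact hΦ.apply_eq_self_of_apply_eq_self_of_orderOf_eq_two hx2 hx g
end

section
/- For every integer n with n ≥ 2, there exists a finite group G that admits no endomorphism of conjugacy type n, i.e. no group homomorphism α : G →* G such that α(g) is conjugate to g^n for every g ∈ G. -/
/-!
The Heisenberg group `H(R)` of upper unitriangular `3 × 3` matrices over a commutative ring `R`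
works for a suitable finite `R`. An endomorphism `α` of conjugacy type `n` acts as `g ↦ g ^ n`
on the abelianisation `R × R` and on the centre `R`. The commutator of `x = (1, 0, 0)` and
`y = (0, 1, 0)` is the central element `z = (0, 0, 1)`, so comparing `α z = z ^ n` with
`α z = ⁅α x, α y⁆` gives `n ^ 2 = n` in `R`. Any finite ring in which `n (n - 1) ≠ 0`,
e.g. `ℤ / (n (n - 1) + 1)`, therefore rules out such an `α`.
-/

def IsOfConjugacyType {G : Type*} [Group G] (α : G →* G) (n : ℤ) : Prop :=
  ∀ g, IsConj (α g) (g ^ n)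

namespace IsOfConjugacyType

variable {G : Type*} [Group G] {α : G →* G} {n : ℤ}

lemma map_apply {A : Type*} [CommGroup A] (hα : IsOfConjugacyType α n) (φ : G →* A) (g : G) :
    φ (α g) = φ g ^ n := by
  rw [← map_zpow]
  exact isConj_iff_eq.mp (φ.map_isConj (hα g))

lemma apply_of_mem_center (hα : IsOfConjugacyType α n) {z : G} (hz : z ∈ Subgroup.center G) :
    α z = z ^ n := by
  obtain ⟨c, hc⟩ := isConj_iff.mp (hα z).symm
  have hzn : z ^ n ∈ Subgroup.center G := Subgroup.zpow_mem _ hz n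
  rw [← hc, Subgroup.mem_center_iff.mp hzn c, mul_inv_cancel_right]

end IsOfConjugacyType

/-- `⟨a, b, c⟩` stands for the matrix `[[1, a, c], [0, 1, b], [0, 0, 1]]`. -/
@[ext]
structure Heis (R : Type*) where
  a : R
  b : R
  c : R

open scoped commutatorElement

namespace Heis

variable {R : Type*} [CommRing R]

instance : Mul (Heis R) := ⟨fun g h => ⟨g.a + h.a, g.b + h.b, g.c + h.c + g.a * h.b⟩⟩

instance : One (Heis R) := ⟨⟨0, 0, 0⟩⟩

instance : Inv (Heis R) := ⟨fun g => ⟨-g.a, -g.b, -g.c + g.a * g.b⟩⟩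

@[simp] lemma mul_a (g h : Heis R) : (g * h).a = g.a + h.a := rfl
@[simp] lemma mul_b (g h : Heis R) : (g * h).b = g.b + h.b := rfl
@[simp] lemma mul_c (g h : Heis R) : (g * h).c = g.c + h.c + g.a * h.b := rfl
@[simp] lemma one_a : (1 : Heis R).a = 0 := rfl
@[simp] lemma one_b : (1 : Heis R).b = 0 := rfl
@[simp] lemma one_c : (1 : Heis R).c = 0 := rfl
@[simp] lemma inv_a (g : Heis R) : g⁻¹.a = -g.a := rfl
@[simp] lemma inv_b (g : Heis R) : g⁻¹.b = -g.b := rfl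
@[simp] lemma inv_c (g : Heis R) : g⁻¹.c = -g.c + g.a * g.b := rfl

instance : Group (Heis R) where
  mul_assoc g h k := by ext <;> simp <;> ring
  one_mul g := by ext <;> simp
  mul_one g := by ext <;> simp
  inv_mul_cancel g := by ext <;> simp

instance [Finite R] : Finite (Heis R) :=
  Finite.of_injective (fun g : Heis R => (g.a, g.b, g.c)) fun g h hgh => by
    simp only [Prod.mk.injEq] at hgh
    ext <;> tauto

def aHom : Heis R →* Multiplicative R where
  toFun g := .ofAdd g.a
  map_one' := rfl
  map_mul' _ _ := rfl

def bHom : Heis R →* Multiplicative R where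
  toFun g := .ofAdd g.b
  map_one' := rfl
  map_mul' _ _ := rfl

def centerHom : Multiplicative R →* Heis R where
  toFun t := ⟨0, 0, t.toAdd⟩
  map_one' := rfl
  map_mul' _ _ := by ext <;> simp

@[simp] lemma centerHom_c (t : Multiplicative R) : (centerHom t).c = t.toAdd := rfl

lemma centerHom_mem_center (t : Multiplicative R) : centerHom t ∈ Subgroup.center (Heis R) :=
  Subgroup.mem_center_iff.mpr fun g => by ext <;> simp [centerHom, add_comm]

@[simp] lemma commutatorElement_c (g h : Heis R) : ⁅g, h⁆.c = g.a * h.b - h.a * g.b := by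
  simp only [commutatorElement_def, mul_c, mul_a, inv_a, inv_b, inv_c]
  ring

variable {α : Heis R →* Heis R} {n : ℤ}

lemma _root_.IsOfConjugacyType.heis_apply_a (hα : IsOfConjugacyType α n) (g : Heis R) :
    (α g).a = n • g.a :=
  congrArg Multiplicative.toAdd (hα.map_apply aHom g)

lemma _root_.IsOfConjugacyType.heis_apply_b (hα : IsOfConjugacyType α n) (g : Heis R) :
    (α g).b = n • g.b :=
  congrArg Multiplicative.toAdd (hα.map_apply bHom g)

lemma _root_.IsOfConjugacyType.heis_apply_centerHom (hα : IsOfConjugacyType α n)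
    (t : Multiplicative R) :
    α (centerHom t) = centerHom (t ^ n) := by
  rw [hα.apply_of_mem_center (centerHom_mem_center t), map_zpow]

theorem intCast_mul_sub_one_eq_zero_of_isOfConjugacyType (hα : IsOfConjugacyType α n) :
    ((n * (n - 1) : ℤ) : R) = 0 := by
  let x : Heis R := ⟨1, 0, 0⟩
  let y : Heis R := ⟨0, 1, 0⟩
  have hxy : ⁅x, y⁆ = centerHom (.ofAdd 1) := by
    ext <;> simp [x, y, centerHom, commutatorElement_def]
  have h := congrArg Heis.c (hα.heis_apply_centerHom (.ofAdd 1))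
  rw [← hxy, map_commutatorElement, commutatorElement_c, hα.heis_apply_a, hα.heis_apply_a,
    hα.heis_apply_b, hα.heis_apply_b] at h
  simp only [x, y, centerHom_c, toAdd_zpow, toAdd_ofAdd, zsmul_eq_mul] at h
  push_cast
  linear_combination h

end Heis

/-- For every integer `n ≥ 2` there is a finite group admitting no endomorphism of
conjugacy type `n`, i.e. no endomorphism `α` with `α g` conjugate to `g ^ n` for all `g`. -/
theorem exists_finite_group_without_conjugacy_type_n (n : ℤ) (hn : 2 ≤ n) :
    ∃ (G : Type) (_ : Group G) (_ : Finite G),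
      ¬ ∃ α : G →* G, ∀ g : G, IsConj (α g) (g ^ n) := by
  set m := (n * (n - 1)).toNat + 1
  have hpos : 0 < n * (n - 1) := by nlinarith
  refine ⟨Heis (ZMod m), inferInstance, inferInstance, fun ⟨α, hα⟩ => ?_⟩
  have hdvd := (ZMod.intCast_zmod_eq_zero_iff_dvd _ m).mp
    (Heis.intCast_mul_sub_one_eq_zero_of_isOfConjugacyType hα)
  have hle := Int.le_of_dvd hpos hdvd
  omega
end

section
/- Let n and m be natural numbers with 2 ≤ n ≤ m and m ≥ 5. Then the subgroup of the symmetric group on m letters generated by the set of all elements of order exactly n is either the alternating group A_m or the full symmetric group S_m. -/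
/-!
Conjugation preserves orders, so the subgroup generated by the elements of order `n` is normal
in `Sym(m)`; it is nontrivial because an `n`-cycle has order `n`. For `m ≥ 5` every nontrivial
normal subgroup of `Sym(m)` contains `Alt(m)`, and `Alt(m)` has index two.
-/

open Equiv Equiv.Perm Subgroup

theorem Subgroup.normal_closure_of_conj_mem {G : Type*} [Group G] {s : Set G}
    (hs : ∀ g ∈ s, ∀ h : G, h * g * h⁻¹ ∈ s) : (closure s).Normal := by
  rw [← normalizer_eq_top_iff, eq_top_iff, le_normalizer_closure_iff]
  exact fun h _ g hg ↦ subset_closure (hs g hg h)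

theorem Subgroup.normal_closure_setOf_orderOf_eq (G : Type*) [Group G] (n : ℕ) :
    (closure {g : G | orderOf g = n}).Normal :=
  normal_closure_of_conj_mem fun g hg h ↦ ((MulAut.conj h).orderOf_eq g).trans hg

theorem Equiv.Perm.exists_orderOf_eq {α : Type*} [Fintype α] [DecidableEq α] {n : ℕ}
    (h2 : 2 ≤ n) (hn : n ≤ Fintype.card α) : ∃ g : Perm α, orderOf g = n := by
  obtain ⟨g, hg⟩ :=
    (exists_with_cycleType_iff α (m := {n})).mpr ⟨by simpa using hn, by simpa using h2⟩
  exact ⟨g, by rw [← lcm_cycleType, hg, Multiset.lcm_singleton, normalize_eq]⟩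

theorem Equiv.Perm.eq_alternatingGroup_or_eq_top_of_le {α : Type*} [Fintype α] [DecidableEq α]
    {H : Subgroup (Perm α)} (hH : alternatingGroup α ≤ H) :
    H = alternatingGroup α ∨ H = ⊤ := by
  nontriviality α
  have hdvd : H.index ∣ 2 := alternatingGroup.index_eq_two (α := α) ▸ index_dvd_of_le hH
  rcases (Nat.dvd_prime Nat.prime_two).mp hdvd with hindex | hindex
  · exact .inr (index_eq_one.mp hindex)
  · exact .inl (eq_alternatingGroup_of_index_eq_two hindex)

/-- For `2 ≤ n ≤ m` and `m ≥ 5`, the subgroup of the symmetric group on `m` letters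
generated by the elements of order exactly `n` is the alternating group or the whole
symmetric group. -/
theorem closure_of_elements_of_order_n_in_symmetric_group
    (n m : ℕ) (h2 : 2 ≤ n) (hnm : n ≤ m) (h5 : 5 ≤ m) :
    Subgroup.closure {σ : Equiv.Perm (Fin m) | orderOf σ = n} = alternatingGroup (Fin m) ∨
    Subgroup.closure {σ : Equiv.Perm (Fin m) | orderOf σ = n} = ⊤ := by
  have hnormal := normal_closure_setOf_orderOf_eq (Perm (Fin m)) n
  obtain ⟨σ, hσ⟩ := exists_orderOf_eq (α := Fin m) h2 (by simpa using hnm)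
  have hσ1 : σ ≠ 1 := by rintro rfl; rw [orderOf_one] at hσ; omega
  have hnontriv : Nontrivial (closure {σ : Perm (Fin m) | orderOf σ = n}) :=
    (nontrivial_iff_exists_ne_one _).mpr ⟨σ, subset_closure hσ, hσ1⟩
  exact eq_alternatingGroup_or_eq_top_of_le
    (alternatingGroup_le_of_normal (by simpa using h5) hnontriv)
end

section
/- Let G be a nontrivial finite group of odd order such that every automorphism of G is inner (i.e. for every group isomorphism φ : G ≃* G there exists h ∈ G with φ(g) = h * g * h⁻¹ for all g). Then G admits no endomorphism of conjugacy type -1, i.e. no group homomorphism α : G →* G such that α(g) is conjugate to g⁻¹ for every g ∈ G. -/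
/-! An endomorphism of conjugacy type `-1` has trivial kernel, so on a finite group it is an
automorphism; if it is inner, every element is conjugate to its own inverse. In a group of odd
order this forces every element to be trivial: if `x g x⁻¹ = g⁻¹`, then `x²` centralises `g`, and
`x` is a power of `x²` because its order is odd, so `g = g⁻¹` has order dividing both `2` and
`|G|`. -/

theorem commute_of_mul_mul_inv_eq_inv_of_odd_orderOf {G : Type*} [Group G] {x g : G}
    (hx : Odd (orderOf x)) (hconj : x * g * x⁻¹ = g⁻¹) : Commute x g := by
  have hsq : x ^ 2 * g * (x ^ 2)⁻¹ = g := by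
    calc x ^ 2 * g * (x ^ 2)⁻¹ = x * (x * g * x⁻¹) * x⁻¹ := by
          simp only [pow_two, mul_inv_rev, mul_assoc]
      _ = x * g⁻¹ * x⁻¹ := by rw [hconj]
      _ = (x * g * x⁻¹)⁻¹ := by simp only [mul_inv_rev, inv_inv, mul_assoc]
      _ = g := by rw [hconj, inv_inv]
  have hmem : x ∈ Subgroup.zpowers (x ^ 2) :=
    mem_zpowers_pow_iff.mpr (Nat.coprime_two_left.mpr hx)
  obtain ⟨k, hk⟩ := Subgroup.mem_zpowers_iff.mp hmem
  rw [← hk]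
  exact Commute.zpow_left (mul_inv_eq_iff_eq_mul.mp hsq) k

theorem eq_one_of_isConj_inv_of_odd_card {G : Type*} [Group G] (hodd : Odd (Nat.card G))
    {g : G} (h : IsConj g g⁻¹) : g = 1 := by
  obtain ⟨x, hx⟩ := isConj_iff.mp h
  have hcomm := commute_of_mul_mul_inv_eq_inv_of_odd_orderOf
    (hodd.of_dvd_nat (orderOf_dvd_natCard x)) hx
  have hsq : g ^ 2 = 1 := by
    rw [pow_two, ← inv_mul_cancel g, ← hx, hcomm.eq, mul_inv_cancel_right]
  exact (pow_eq_one_iff_of_coprime (Nat.coprime_two_left.mpr hodd)).mp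
    ⟨hsq, pow_card_eq_one'⟩

theorem MonoidHom.injective_of_isConj_inv {G : Type*} [Group G] {α : G →* G}
    (hα : ∀ g, IsConj (α g) g⁻¹) : Function.Injective α := by
  refine (injective_iff_map_eq_one α).mpr fun g hg => ?_
  have hconj := hα g
  rw [hg, isConj_one_right] at hconj
  exact inv_eq_one.mp hconj

/-- A nontrivial finite group of odd order all of whose automorphisms are inner admits no
endomorphism of conjugacy type `-1`. -/
theorem no_conjugacy_type_neg_one_of_odd_complete {G : Type*} [Group G] [Finite G]
    [Nontrivial G] (hodd : Odd (Nat.card G))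
    (hinn : ∀ φ : G ≃* G, ∃ h : G, ∀ g : G, φ g = h * g * h⁻¹) :
    ¬ ∃ α : G →* G, ∀ g : G, IsConj (α g) g⁻¹ := by
  rintro ⟨α, hα⟩
  have hbij : Function.Bijective α :=
    Finite.injective_iff_bijective.mp (MonoidHom.injective_of_isConj_inv hα)
  obtain ⟨h, hh⟩ := hinn (MulEquiv.ofBijective α hbij)
  have hreal (g : G) : IsConj g g⁻¹ :=
    (isConj_iff.mpr ⟨h, (hh g).symm⟩).trans (hα g)
  obtain ⟨a, b, hab⟩ := exists_pair_ne G
  exact hab ((eq_one_of_isConj_inv_of_odd_card hodd (hreal a)).trans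
    (eq_one_of_isConj_inv_of_odd_card hodd (hreal b)).symm)
end

section
/- Suppose that for every pair of groups G, H (in a fixed universe) and every group homomorphism α : G →* H an element Ψ(α) ∈ H is given such that Ψ(α) lies in the center of the centralizer of the image of α (i.e. Ψ(α) commutes with α(g) for all g ∈ G, and Ψ(α) commutes with every element of H that commutes with all α(g)), and such that the cocycle condition Ψ(γ ∘ β) = Ψ(γ) * γ(Ψ(β)) holds for all composable homomorphisms β : L →* M and γ : M →* N. For each group F let ε_F denote the unique homomorphism from the trivial group to F, and set Φ(F) = Ψ(ε_F) ∈ F. Then for every homomorphism α : G →* H one has Ψ(α) = Φ(H) * α(Φ(G))⁻¹. -/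
universe u

theorem one_cocycle_is_coboundary_general
    (Ψ : ∀ (G H : Type u) [Group G] [Group H], (G →* H) → H)
    (hcoc : ∀ (L M N : Type u) [Group L] [Group M] [Group N] (β : L →* M) (γ : M →* N),
      Ψ L N (γ.comp β) = Ψ M N γ * γ (Ψ L M β)) :
    ∀ (G H : Type u) [Group G] [Group H] (α : G →* H),
      Ψ G H α = Ψ PUnit.{u + 1} H 1 * (α (Ψ PUnit.{u + 1} G 1))⁻¹ := by
  intro G H _ _ α
  have hfactor := hcoc PUnit.{u + 1} G H 1 α
  rw [MonoidHom.comp_one] at hfactor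
  exact eq_mul_inv_of_mul_eq hfactor.symm

/-- Every 1-cocycle `Ψ` on the category of groups with values in the centers of
centralizers is a coboundary: `Ψ α = Φ H * (α (Φ G))⁻¹` where `Φ F = Ψ ε_F` is the value
at the unique homomorphism from the trivial group. -/
theorem one_cocycle_is_coboundary
    (Ψ : ∀ (G H : Type u) [Group G] [Group H], (G →* H) → H)
    (hcomm : ∀ (G H : Type u) [Group G] [Group H] (α : G →* H) (g : G),
      Commute (Ψ G H α) (α g))
    (hcent : ∀ (G H : Type u) [Group G] [Group H] (α : G →* H) (h : H),
      (∀ g : G, Commute h (α g)) → Commute (Ψ G H α) h)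
    (hcoc : ∀ (L M N : Type u) [Group L] [Group M] [Group N] (β : L →* M) (γ : M →* N),
      Ψ L N (γ.comp β) = Ψ M N γ * γ (Ψ L M β)) :
    ∀ (G H : Type u) [Group G] [Group H] (α : G →* H),
      Ψ G H α = Ψ PUnit.{u + 1} H 1 * (α (Ψ PUnit.{u + 1} G 1))⁻¹ :=
  one_cocycle_is_coboundary_general Ψ hcoc
end

section
/- Let X be a topological space and let s : ZerothHomotopy X → X be a function choosing a representative point in each path component (so that the path component of s(c) is c for every c). Then there is a monoid isomorphism between the center of the fundamental groupoid of X, i.e. the monoid End(𝟭 Π₁X) of natural transformations from the identity functor of the fundamental groupoid Π₁X to itself under vertical composition, and the product over all c ∈ ZerothHomotopy X of the centers of the fundamental groups π₁(X, s(c)). -/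
/-!
A natural transformation `α : 𝟭 G ⟶ 𝟭 G` of a groupoid is determined by its components at
one object per connected component, since naturality forces `α.app y = f⁻¹ ≫ α.app x ≫ f` for
every `f : x ⟶ y`; naturality with respect to loops at `x` makes `α.app x` central in `End x`.
Conversely a central loop `z` at `x` transports to `f⁻¹ ≫ z ≫ f` at `y` independently of the
choice of `f`, because two choices differ by a loop at `x`, which commutes with `z`.
-/

open CategoryTheory

namespace CategoryTheory.Groupoid

variable {G : Type*} [Groupoid G]

lemma inv_comp_comp_eq_of_mem_center {x y : G} {z : End x} (hz : z ∈ Subgroup.center (End x))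
    (f g : x ⟶ y) : inv f ≫ z ≫ f = inv g ≫ z ≫ g := by
  have hcomm : z ≫ f ≫ inv g = f ≫ inv g ≫ z := by
    simpa using Subgroup.mem_center_iff.mp hz (f ≫ inv g)
  calc inv f ≫ z ≫ f = inv f ≫ (z ≫ f ≫ inv g) ≫ g := by simp
    _ = inv g ≫ z ≫ g := by rw [hcomm]; simp

lemma catCenter_app_eq_inv_comp_app_comp (α : CatCenter G) {x y : G} (f : x ⟶ y) :
    α.app y = inv f ≫ α.app x ≫ f := by
  simpa using α.naturality f

def catCenterApp (x : G) : CatCenter G →* Subgroup.center (End x) where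
  toFun α := ⟨α.app x, Subgroup.mem_center_iff.mpr fun g => (α.naturality g).symm⟩
  map_one' := rfl
  map_mul' _ _ := rfl

section Components

-- `comp` labels the connected components of `G` by `ι`; `s` picks one object in each of them.
variable {ι : Type*} (comp : G → ι) (s : ι → G)
  (hcomp : ∀ {x y : G}, comp x = comp y ↔ Nonempty (x ⟶ y)) (hs : ∀ c, comp (s c) = c)

noncomputable def transportCenters (z : ∀ c, Subgroup.center (End (s c))) (x : G) : x ⟶ x :=
  let e : s (comp x) ⟶ x := (hcomp.mp (hs (comp x))).some
  inv e ≫ (z (comp x) : End (s (comp x))) ≫ e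

lemma transportCenters_eq (z : ∀ c, Subgroup.center (End (s c))) {c : ι} {x : G}
    (f : s c ⟶ x) : transportCenters comp s hcomp hs z x = inv f ≫ (z c : End (s c)) ≫ f := by
  obtain rfl : comp x = c := (hcomp.mpr ⟨f⟩).symm.trans (hs c)
  exact inv_comp_comp_eq_of_mem_center (z (comp x)).2 _ f

noncomputable def catCenterOfCenters (z : ∀ c, Subgroup.center (End (s c))) : CatCenter G where
  app := transportCenters comp s hcomp hs z
  naturality x y f := by
    obtain ⟨g⟩ := hcomp.mp (hs (comp x))
    simp [transportCenters_eq comp s hcomp hs z g, transportCenters_eq comp s hcomp hs z (g ≫ f)]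

lemma catCenterOfCenters_catCenterApp (α : CatCenter G) :
    catCenterOfCenters comp s hcomp hs (fun c => catCenterApp (s c) α) = α := by
  refine CatCenter.ext _ _ fun x => ?_
  obtain ⟨g⟩ := hcomp.mp (hs (comp x))
  exact (transportCenters_eq comp s hcomp hs (fun c => catCenterApp (s c) α) g).trans
    (catCenter_app_eq_inv_comp_app_comp α g).symm

lemma catCenterApp_catCenterOfCenters (z : ∀ c, Subgroup.center (End (s c))) (c : ι) :
    catCenterApp (s c) (catCenterOfCenters comp s hcomp hs z) = z c := by
  ext
  exact (transportCenters_eq comp s hcomp hs z (𝟙 (s c))).trans (by simp)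

noncomputable def catCenterEquivPiCenter : CatCenter G ≃* ∀ c, Subgroup.center (End (s c)) where
  toFun α c := catCenterApp (s c) α
  invFun := catCenterOfCenters comp s hcomp hs
  left_inv := catCenterOfCenters_catCenterApp comp s hcomp hs
  right_inv z := funext (catCenterApp_catCenterOfCenters comp s hcomp hs z)
  map_mul' _ _ := rfl

end Components

end CategoryTheory.Groupoid

lemma FundamentalGroupoid.zerothHomotopy_mk_eq_iff_nonempty_hom {X : Type*} [TopologicalSpace X]
    {x y : FundamentalGroupoid X} :
    ZerothHomotopy.mk x.as = ZerothHomotopy.mk y.as ↔ Nonempty (x ⟶ y) :=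
  Quotient.eq.trans (nonempty_quotient_iff _).symm

/-- The center of the fundamental groupoid of a space `X` is isomorphic, as a monoid, to
the product over the path components of `X` of the centers of the fundamental groups at
chosen base points. -/
theorem center_fundamentalGroupoid_iso_prod_centers
    (X : Type*) [TopologicalSpace X] (s : ZerothHomotopy X → X)
    (hs : ∀ c : ZerothHomotopy X, @Quotient.mk' X (pathSetoid X) (s c) = c) :
    Nonempty
      (End (𝟭 (FundamentalGroupoid X)) ≃*
        ∀ c : ZerothHomotopy X, Subgroup.center (FundamentalGroup X (s c))) :=
  ⟨Groupoid.catCenterEquivPiCenter (fun x : FundamentalGroupoid X => ZerothHomotopy.mk x.as)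
    (fun c => FundamentalGroupoid.mk (s c))
    FundamentalGroupoid.zerothHomotopy_mk_eq_iff_nonempty_hom hs⟩
end

section
/- Let C be a connected groupoid, i.e. a groupoid in which any two objects are isomorphic, and let x be an object of C. Then there is a monoid isomorphism between End(𝟭 C), the monoid of natural transformations from the identity functor of C to itself under vertical composition, and the center of the automorphism group Aut(x) of x in C. -/
/-!
A central endomorphism of the identity functor is determined by its component at `x`: naturality
along an isomorphism `e : x ≅ y` says its component at `y` is the conjugate of the one at `x`.
Conversely, a central endomorphism `f` of `x`, transported to every `y` along a chosen isomorphism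
`x ≅ y`, is natural, because conjugating a morphism `a ⟶ b` by the chosen isomorphisms turns it into
an endomorphism of `x`, which commutes with `f`. So evaluation at `x` identifies the center of any
category whose objects are pairwise isomorphic with the center of the monoid `End x`; in a groupoid
that monoid is the group `Aut x`.
-/

open CategoryTheory

lemma CategoryTheory.Iso.conj_eq_of_mem_center {C : Type*} [Category C] {x : C} {f : End x}
    (hf : f ∈ Submonoid.center (End x)) (e : x ≅ x) : e.conj f = f := by
  rw [Iso.conj_apply, Iso.inv_comp_eq]
  exact Submonoid.mem_center_iff.1 hf e.hom

namespace CategoryTheory.CatCenter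

variable {C : Type*} [Category C]

lemma app_mem_center (z : CatCenter C) (x : C) : (z.app x : End x) ∈ Submonoid.center (End x) :=
  Submonoid.mem_center_iff (M := End x) |>.2 fun f => (z.naturality f).symm

def evalCenter (x : C) : CatCenter C →* Submonoid.center (End x) where
  toFun z := ⟨z.app x, z.app_mem_center x⟩
  map_one' := rfl
  map_mul' _ _ := rfl

lemma app_eq_conj (z : CatCenter C) {x y : C} (e : x ≅ y) : z.app y = e.conj (z.app x) := by
  rw [Iso.conj_apply, ← z.naturality, Iso.inv_hom_id_assoc]

def ofCenter {x : C} (e : ∀ y, x ≅ y) (f : Submonoid.center (End x)) : CatCenter C where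
  app y := (e y).conj f
  naturality a b g := by
    have hf := Submonoid.mem_center_iff.1 f.2 ((e a).hom ≫ g ≫ (e b).inv)
    simp only [End.mul_def, Category.assoc] at hf
    simp only [Functor.id_obj, Functor.id_map, Iso.conj_apply]
    calc g ≫ (e b).inv ≫ f.1 ≫ (e b).hom
        = (e a).inv ≫ ((e a).hom ≫ g ≫ (e b).inv ≫ f.1) ≫ (e b).hom := by simp
      _ = ((e a).inv ≫ f.1 ≫ (e a).hom) ≫ g := by rw [← hf]; simp

lemma evalCenter_ofCenter {x : C} (e : ∀ y, x ≅ y) (f : Submonoid.center (End x)) :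
    evalCenter x (ofCenter e f) = f :=
  Subtype.ext (Iso.conj_eq_of_mem_center f.2 (e x))

lemma ofCenter_evalCenter {x : C} (e : ∀ y, x ≅ y) (z : CatCenter C) :
    ofCenter e (evalCenter x z) = z :=
  ext _ _ fun y => (z.app_eq_conj (e y)).symm

noncomputable def mulEquivCenterEnd {x : C} (hx : ∀ y, Nonempty (x ≅ y)) :
    CatCenter C ≃* Submonoid.center (End x) :=
  { evalCenter x with
    invFun := ofCenter fun y => (hx y).some
    left_inv := ofCenter_evalCenter _
    right_inv := evalCenter_ofCenter _ }

end CategoryTheory.CatCenter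

def CategoryTheory.Groupoid.endMulEquivAut {C : Type*} [Groupoid C] (x : C) : End x ≃* Aut x :=
  toUnits.trans (Aut.unitsEndEquivAut x)

/-- The center of a connected groupoid is isomorphic, as a monoid, to the center of the
automorphism group of any of its objects. -/
theorem center_of_connected_groupoid (C : Type u) [Groupoid.{v} C]
    (hconn : ∀ x y : C, Nonempty (x ≅ y)) (x : C) :
    Nonempty (End (𝟭 C) ≃* Subgroup.center (Aut x)) :=
  ⟨(CatCenter.mulEquivCenterEnd (hconn x)).trans <|
    (Submonoid.centerCongr (Groupoid.endMulEquivAut x)).trans <|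
      MulEquiv.submonoidCongr (Subgroup.center_toSubmonoid _).symm⟩
end
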